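/- Let α ∈ (0,1). A continuous function f : [0,1] → ℝ^d is α-Hölder continuous if and only if sup_{p,m} 2^{p(α − 1/2)} |⟨H_{pm}, df⟩| < ∞, and in that case sup_{p,m} 2^{p(α − 1/2)} |⟨H_{pm}, df⟩| is comparable (up to constants depending only on α) to the Hölder seminorm sup_{s<t} |f(t)−f(s)|/|t−s|^α. -/

import Mathlib

/-!
Hölder ⇒ Haar: the coefficient at level `p` is `2^{p/2}` times a second difference over two
intervals of length `2^{-p-1}`, hence `O(2^{p/2 - pα})`.

Haar ⇒ Hölder: with `ρ = 2^{-α}`, the bound `K ρ^n` on the midpoint defects `2 f(m) - f(a) - f(b)`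
of the dyadic intervals of level `n` propagates, by induction on the level, to the bound
`K ρ^n / (2ρ - 1)` on the increments of `f` over them. Summing these along the dyadic
approximations `t_n = ⌊2^n t⌋ / 2^n` of a point and passing to the limit by continuity gives
`‖f t - f t_n‖ = O(ρ^n)`, and two points at distance about `2^{-n}` have equal or adjacent
level-`n` approximations.
-/

noncomputable section
open MeasureTheory Set

/-- The Haar coefficient `⟨H_{pm}, df⟩ = 2^{p/2} (2 f(t¹_{pm}) - f(t⁰_{pm}) - f(t²_{pm}))`. -/
def haarCoeff {d : ℕ} (f : ℝ → EuclideanSpace ℝ (Fin d)) (p m : ℕ) : EuclideanSpace ℝ (Fin d) :=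
  (2 : ℝ) ^ ((p : ℝ) / 2) •
    (2 • f ((2 * (m : ℝ) - 1) / 2 ^ (p + 1)) - f (((m : ℝ) - 1) / 2 ^ p) - f ((m : ℝ) / 2 ^ p))

/-- `f` is `α`-Hölder on `[0,1]` with constant `K`. -/
def HolderBound {d : ℕ} (α : ℝ) (f : ℝ → EuclideanSpace ℝ (Fin d)) (K : ℝ) : Prop :=
  ∀ s ∈ Icc (0:ℝ) 1, ∀ t ∈ Icc (0:ℝ) 1, ‖f t - f s‖ ≤ K * |t - s| ^ α

/-- `sup_{p,m} 2^{p(α-1/2)} |⟨H_{pm}, df⟩| ≤ K`, including the coefficient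
`⟨H_{00}, df⟩ = f(1) - f(0)`. -/
def HaarCoeffBound {d : ℕ} (α : ℝ) (f : ℝ → EuclideanSpace ℝ (Fin d)) (K : ℝ) : Prop :=
  ‖f 1 - f 0‖ ≤ K ∧
  ∀ p m : ℕ, 1 ≤ m → m ≤ 2 ^ p →
    (2 : ℝ) ^ ((p : ℝ) * (α - 1 / 2)) * ‖haarCoeff f p m‖ ≤ K

open Filter Topology

section Dyadic

lemma floor_mul_two_pow_succ (t : ℝ) (n : ℕ) :
    ⌊t * 2 ^ (n + 1)⌋₊ = 2 * ⌊t * 2 ^ n⌋₊ ∨ ⌊t * 2 ^ (n + 1)⌋₊ = 2 * ⌊t * 2 ^ n⌋₊ + 1 := by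
  have h : ⌊t * 2 ^ n⌋₊ = ⌊t * 2 ^ (n + 1)⌋₊ / 2 := by
    rw [← Nat.floor_div_ofNat, pow_succ, mul_div_assoc, mul_div_cancel_right₀ _ two_ne_zero]
  omega

lemma floor_mul_two_pow_le {t : ℝ} (ht : t ≤ 1) (n : ℕ) : ⌊t * 2 ^ n⌋₊ ≤ 2 ^ n :=
  Nat.floor_le_of_le (by push_cast; exact mul_le_of_le_one_left (by positivity) ht)

lemma floor_mul_two_pow_le_succ {s t : ℝ} (hs : 0 ≤ s) {n : ℕ} (hst : t - s ≤ (2 ^ n)⁻¹) :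
    ⌊t * 2 ^ n⌋₊ ≤ ⌊s * 2 ^ n⌋₊ + 1 := by
  rw [← Nat.floor_add_one (by positivity)]
  refine Nat.floor_le_floor ?_
  have := mul_le_mul_of_nonneg_right hst (by positivity : (0:ℝ) ≤ 2 ^ n)
  rw [inv_mul_cancel₀ (by positivity), sub_mul] at this
  linarith

lemma two_mul_div_two_pow_succ (x : ℝ) (n : ℕ) : 2 * x / 2 ^ (n + 1) = x / 2 ^ n := by
  rw [pow_succ']; field_simp

lemma cast_div_two_pow_mem_Icc {k n : ℕ} (hk : k ≤ 2 ^ n) : (k : ℝ) / 2 ^ n ∈ Icc (0 : ℝ) 1 :=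
  ⟨by positivity, (div_le_one (by positivity)).2 (by exact_mod_cast hk)⟩

def dyadicApprox (n : ℕ) (t : ℝ) : ℝ := ⌊t * 2 ^ n⌋₊ / 2 ^ n

lemma dyadicApprox_mem_Icc {t : ℝ} (ht : t ∈ Icc (0 : ℝ) 1) (n : ℕ) :
    dyadicApprox n t ∈ Icc (0 : ℝ) 1 :=
  cast_div_two_pow_mem_Icc (floor_mul_two_pow_le ht.2 n)

lemma tendsto_dyadicApprox {t : ℝ} (ht : 0 ≤ t) :
    Tendsto (fun n ↦ dyadicApprox n t) atTop (𝓝 t) :=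
  (tendsto_nat_floor_mul_div_atTop ht).comp (tendsto_pow_atTop_atTop_of_one_lt one_lt_two)

end Dyadic

section MidpointDefect

variable {E : Type*} [SeminormedAddCommGroup E]

lemma two_mul_norm_sub_le_midpoint_defect [NormedSpace ℝ E] (a b m : E) :
    2 * ‖m - a‖ ≤ ‖2 • m - a - b‖ + ‖b - a‖ ∧ 2 * ‖b - m‖ ≤ ‖2 • m - a - b‖ + ‖b - a‖ := by
  have hnorm (x : E) : ‖2 • x‖ = 2 * ‖x‖ := by
    rw [← Nat.cast_smul_eq_nsmul ℝ, norm_smul]; norm_num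
  constructor
  · rw [← hnorm, show 2 • (m - a) = (2 • m - a - b) + (b - a) by abel]
    exact norm_add_le _ _
  · rw [← hnorm, show 2 • (b - m) = (b - a) - (2 • m - a - b) by abel, add_comm]
    exact norm_sub_le _ _

def MidpointDefectBound (ρ : ℝ) (f : ℝ → E) (K : ℝ) : Prop :=
  ‖f 1 - f 0‖ ≤ K ∧ ∀ n k : ℕ, k < 2 ^ n →
    ‖2 • f ((2 * k + 1) / 2 ^ (n + 1)) - f (k / 2 ^ n) - f ((k + 1) / 2 ^ n)‖ ≤ K * ρ ^ n

def modulusConst (ρ : ℝ) : ℝ := (1 + ρ) / ((2 * ρ - 1) * (1 - ρ))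

variable {ρ K : ℝ} {f : ℝ → E}

lemma modulusConst_pos (hρ : 1 / 2 < ρ) (hρ1 : ρ < 1) : 0 < modulusConst ρ :=
  div_pos (by linarith) (mul_pos (by linarith) (by linarith))

namespace MidpointDefectBound

lemma nonneg (h : MidpointDefectBound ρ f K) : 0 ≤ K := (norm_nonneg _).trans h.1

lemma mono (h : MidpointDefectBound ρ f K) (hρ : 0 ≤ ρ) {K' : ℝ} (hK : K ≤ K') :
    MidpointDefectBound ρ f K' :=
  ⟨h.1.trans hK, fun n k hk ↦ (h.2 n k hk).trans (by gcongr)⟩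

/-- Halving a dyadic interval halves the increment of `f` up to the midpoint defect, and
`1 / (2ρ - 1)` is the fixed point of `c ↦ (1 + c) / (2ρ)`. -/
lemma norm_sub_le_of_adjacent [NormedSpace ℝ E] (h : MidpointDefectBound ρ f K)
    (hρ : 1 / 2 < ρ) (hρ1 : ρ ≤ 1) :
    ∀ n k : ℕ, k < 2 ^ n → ‖f ((k + 1) / 2 ^ n) - f (k / 2 ^ n)‖ ≤ K * ρ ^ n / (2 * ρ - 1) := by
  have hρ' : 0 < 2 * ρ - 1 := by linarith
  intro n
  induction n with
  | zero =>
    intro k hk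
    obtain rfl : k = 0 := by simpa using hk
    simpa using h.1.trans (le_div_self h.nonneg hρ' (by linarith))
  | succ n ih =>
    intro k hk
    obtain ⟨j, hkj⟩ := Nat.even_or_odd' k
    have hj : j < 2 ^ n := by rw [pow_succ] at hk; omega
    have hdefect : ‖2 • f ((2 * j + 1) / 2 ^ (n + 1)) - f (j / 2 ^ n) - f ((j + 1) / 2 ^ n)‖
        + ‖f ((j + 1) / 2 ^ n) - f (j / 2 ^ n)‖ ≤ 2 * (K * ρ ^ (n + 1) / (2 * ρ - 1)) := by
      have hhalf : K * ρ ^ n + K * ρ ^ n / (2 * ρ - 1) = 2 * (K * ρ ^ (n + 1) / (2 * ρ - 1)) := by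
        field_simp; ring
      exact hhalf ▸ add_le_add (h.2 n j hj) (ih j hj)
    obtain ⟨hleft, hright⟩ := two_mul_norm_sub_le_midpoint_defect
      (f (j / 2 ^ n)) (f ((j + 1) / 2 ^ n)) (f ((2 * j + 1) / 2 ^ (n + 1)))
    rcases hkj with rfl | rfl
    · rw [Nat.cast_mul, Nat.cast_two, two_mul_div_two_pow_succ]
      linarith
    · rw [Nat.cast_add, Nat.cast_mul, Nat.cast_two, Nat.cast_one, add_assoc, one_add_one_eq_two,
        ← mul_add_one, two_mul_div_two_pow_succ]
      linarith

variable [NormedSpace ℝ E]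

lemma norm_sub_dyadicApprox_succ_le (h : MidpointDefectBound ρ f K) (hρ : 1 / 2 < ρ)
    (hρ1 : ρ ≤ 1) {t : ℝ} (ht : t ∈ Icc (0 : ℝ) 1) (n : ℕ) :
    ‖f (dyadicApprox (n + 1) t) - f (dyadicApprox n t)‖ ≤ K * ρ ^ (n + 1) / (2 * ρ - 1) := by
  rcases floor_mul_two_pow_succ t n with hk | hk
  · have hsame : dyadicApprox (n + 1) t = dyadicApprox n t := by
      rw [dyadicApprox, dyadicApprox, hk, Nat.cast_mul, Nat.cast_two, two_mul_div_two_pow_succ]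
    rw [hsame, sub_self, norm_zero]
    exact div_nonneg (mul_nonneg h.nonneg (pow_nonneg (by linarith) _)) (by linarith)
  · have hlt : 2 * ⌊t * 2 ^ n⌋₊ < 2 ^ (n + 1) := by
      have := floor_mul_two_pow_le ht.2 (n + 1)
      omega
    have := h.norm_sub_le_of_adjacent hρ hρ1 (n + 1) _ hlt
    rw [dyadicApprox, dyadicApprox, hk]
    push_cast at this ⊢
    rwa [two_mul_div_two_pow_succ] at this

lemma norm_sub_dyadicApprox_le (h : MidpointDefectBound ρ f K) (hρ : 1 / 2 < ρ) (hρ1 : ρ < 1)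
    (hf : ContinuousOn f (Icc 0 1)) {t : ℝ} (ht : t ∈ Icc (0 : ℝ) 1) (n : ℕ) :
    ‖f t - f (dyadicApprox n t)‖ ≤ K * ρ ^ (n + 1) / (2 * ρ - 1) / (1 - ρ) := by
  have hlim : Tendsto (fun n ↦ f (dyadicApprox n t)) atTop (𝓝 (f t)) :=
    (hf t ht).tendsto.comp <| tendsto_nhdsWithin_iff.2
      ⟨tendsto_dyadicApprox ht.1, Eventually.of_forall fun n ↦ dyadicApprox_mem_Icc ht n⟩
  have hstep (n : ℕ) :
      dist (f (dyadicApprox n t)) (f (dyadicApprox (n + 1) t)) ≤ K * ρ / (2 * ρ - 1) * ρ ^ n := by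
    rw [dist_eq_norm']
    convert h.norm_sub_dyadicApprox_succ_le hρ hρ1.le ht n using 1
    ring
  calc ‖f t - f (dyadicApprox n t)‖ = dist (f (dyadicApprox n t)) (f t) := by rw [dist_eq_norm']
    _ ≤ K * ρ / (2 * ρ - 1) * ρ ^ n / (1 - ρ) :=
        dist_le_of_le_geometric_of_tendsto ρ _ hρ1 hstep hlim n
    _ = K * ρ ^ (n + 1) / (2 * ρ - 1) / (1 - ρ) := by ring

lemma norm_sub_le_of_sub_le_inv_two_pow (h : MidpointDefectBound ρ f K) (hρ : 1 / 2 < ρ)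
    (hρ1 : ρ < 1) (hf : ContinuousOn f (Icc 0 1))
    {s t : ℝ} (hs : s ∈ Icc (0 : ℝ) 1) (ht : t ∈ Icc (0 : ℝ) 1) (hst : s ≤ t) {n : ℕ}
    (hn : t - s ≤ (2 ^ n)⁻¹) :
    ‖f t - f s‖ ≤ modulusConst ρ * K * ρ ^ n := by
  have hcoarse : ‖f (dyadicApprox n t) - f (dyadicApprox n s)‖ ≤ K * ρ ^ n / (2 * ρ - 1) := by
    have hle : ⌊s * 2 ^ n⌋₊ ≤ ⌊t * 2 ^ n⌋₊ := Nat.floor_le_floor (by gcongr)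
    rcases (floor_mul_two_pow_le_succ hs.1 hn).eq_or_lt with hadj | hlt
    · have := h.norm_sub_le_of_adjacent hρ hρ1.le n ⌊s * 2 ^ n⌋₊
        (by have := floor_mul_two_pow_le ht.2 n; omega)
      rwa [dyadicApprox, dyadicApprox, hadj, Nat.cast_succ]
    · rw [dyadicApprox, dyadicApprox, show ⌊t * 2 ^ n⌋₊ = ⌊s * 2 ^ n⌋₊ by omega, sub_self,
        norm_zero]
      exact div_nonneg (mul_nonneg h.nonneg (pow_nonneg (by linarith) _)) (by linarith)
  have hfine_t := h.norm_sub_dyadicApprox_le hρ hρ1 hf ht n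
  have hfine_s := h.norm_sub_dyadicApprox_le hρ hρ1 hf hs n
  rw [norm_sub_rev] at hfine_s
  calc ‖f t - f s‖
      ≤ ‖f t - f (dyadicApprox n t)‖ + ‖f (dyadicApprox n t) - f s‖ :=
        norm_sub_le_norm_sub_add_norm_sub _ _ _
    _ ≤ ‖f t - f (dyadicApprox n t)‖ + (‖f (dyadicApprox n t) - f (dyadicApprox n s)‖
        + ‖f (dyadicApprox n s) - f s‖) :=
          add_le_add_right (norm_sub_le_norm_sub_add_norm_sub _ _ _) _
    _ ≤ 2 * (K * ρ ^ (n + 1) / (2 * ρ - 1) / (1 - ρ)) + K * ρ ^ n / (2 * ρ - 1) := by linarith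
    _ = modulusConst ρ * K * ρ ^ n := by
        have : 2 * ρ - 1 ≠ 0 := by linarith
        have : 1 - ρ ≠ 0 := by linarith
        unfold modulusConst
        field_simp
        ring

end MidpointDefectBound

end MidpointDefect

lemma inv_two_pow_rpow (n : ℕ) (α : ℝ) : ((2 : ℝ) ^ n)⁻¹ ^ α = ((2 : ℝ) ^ (-α)) ^ n := by
  rw [Real.inv_rpow (by positivity), ← Real.rpow_pow_comm zero_le_two, Real.rpow_neg zero_le_two,
    inv_pow]

lemma half_lt_two_rpow_neg {α : ℝ} (hα1 : α < 1) : 1 / 2 < (2 : ℝ) ^ (-α) := by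
  rw [one_div, ← Real.rpow_neg_one]
  exact Real.rpow_lt_rpow_of_exponent_lt one_lt_two (by linarith)

section Holder

variable {α K : ℝ} {d : ℕ} {f : ℝ → EuclideanSpace ℝ (Fin d)}

lemma HolderBound.norm_endpoints_le (h : HolderBound α f K) : ‖f 1 - f 0‖ ≤ K := by
  simpa using h 0 (left_mem_Icc.2 zero_le_one) 1 (right_mem_Icc.2 zero_le_one)

lemma HolderBound.nonneg (h : HolderBound α f K) : 0 ≤ K :=
  (norm_nonneg _).trans h.norm_endpoints_le

lemma HolderBound.mono (h : HolderBound α f K) {K' : ℝ} (hK : K ≤ K') : HolderBound α f K' :=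
  fun s hs t ht ↦ (h s hs t ht).trans (by gcongr)

lemma HolderBound.midpointDefectBound (h : HolderBound α f K) (hα : 0 ≤ α) :
    MidpointDefectBound ((2 : ℝ) ^ (-α)) f (2 * K) := by
  refine ⟨h.norm_endpoints_le.trans (by linarith [h.nonneg]), fun n k hk ↦ ?_⟩
  have ha : (k : ℝ) / 2 ^ n ∈ Icc (0 : ℝ) 1 := cast_div_two_pow_mem_Icc hk.le
  have hb : ((k : ℝ) + 1) / 2 ^ n ∈ Icc (0 : ℝ) 1 := by
    exact_mod_cast cast_div_two_pow_mem_Icc (k := k + 1) hk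
  have hm : (2 * (k : ℝ) + 1) / 2 ^ (n + 1) ∈ Icc (0 : ℝ) 1 := by
    exact_mod_cast cast_div_two_pow_mem_Icc (k := 2 * k + 1) (by rw [pow_succ]; omega)
  have hhalf (x y : ℝ) (hxy : y - x = ((2 : ℝ) ^ (n + 1))⁻¹) (hx : x ∈ Icc (0 : ℝ) 1)
      (hy : y ∈ Icc (0 : ℝ) 1) : ‖f y - f x‖ ≤ K * (2 ^ (-α)) ^ (n + 1) := by
    simpa [hxy, inv_two_pow_rpow] using h x hx y hy
  have hleft := hhalf _ _ (by rw [pow_succ]; field_simp; ring) ha hm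
  have hright := hhalf _ _ (by rw [pow_succ]; field_simp; ring) hm hb
  calc ‖2 • f ((2 * k + 1) / 2 ^ (n + 1)) - f (k / 2 ^ n) - f ((k + 1) / 2 ^ n)‖
      = ‖(f ((2 * k + 1) / 2 ^ (n + 1)) - f (k / 2 ^ n))
          - (f ((k + 1) / 2 ^ n) - f ((2 * k + 1) / 2 ^ (n + 1)))‖ := by rw [two_nsmul]; abel_nf
    _ ≤ 2 * K * (2 ^ (-α)) ^ (n + 1) := (norm_sub_le _ _).trans (by linarith)
    _ ≤ 2 * K * (2 ^ (-α)) ^ n :=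
        mul_le_mul_of_nonneg_left (pow_le_pow_of_le_one (by positivity)
          (Real.rpow_le_one_of_one_le_of_nonpos one_le_two (by linarith)) n.le_succ)
          (by linarith [h.nonneg])

lemma holderBound_of_midpointDefectBound (hα0 : 0 < α) (hα1 : α < 1)
    (hf : ContinuousOn f (Icc 0 1)) (h : MidpointDefectBound ((2 : ℝ) ^ (-α)) f K) :
    HolderBound α f (2 ^ α * modulusConst (2 ^ (-α)) * K) := by
  have hρ := half_lt_two_rpow_neg hα1
  have hρ1 : (2 : ℝ) ^ (-α) < 1 := Real.rpow_lt_one_of_one_lt_of_neg one_lt_two (by linarith)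
  suffices hlt : ∀ s ∈ Icc (0 : ℝ) 1, ∀ t ∈ Icc (0 : ℝ) 1, s < t →
      ‖f t - f s‖ ≤ 2 ^ α * modulusConst (2 ^ (-α)) * K * (t - s) ^ α by
    intro s hs t ht
    rcases lt_trichotomy s t with hst | rfl | hst
    · simpa [abs_of_pos (sub_pos.2 hst)] using hlt s hs t ht hst
    · simp [Real.zero_rpow hα0.ne']
    · simpa [norm_sub_rev, abs_of_neg (sub_neg.2 hst)] using hlt t ht s hs hst
  intro s hs t ht hst
  have hts : 0 < t - s := sub_pos.2 hst
  obtain ⟨n, hn, hn'⟩ := exists_nat_pow_near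
    (one_le_inv_iff₀.2 ⟨hts, by linarith [hs.1, ht.2]⟩) one_lt_two
  have hcoarse : t - s ≤ (2 ^ n)⁻¹ := (le_inv_comm₀ hts (by positivity)).2 hn
  have hfine : ((2 : ℝ) ^ n)⁻¹ ≤ 2 * (t - s) := by
    have := (inv_lt_comm₀ hts (by positivity)).1 hn'
    rw [pow_succ, mul_inv] at this
    linarith
  calc ‖f t - f s‖ ≤ modulusConst (2 ^ (-α)) * K * ((2 : ℝ) ^ (-α)) ^ n :=
        h.norm_sub_le_of_sub_le_inv_two_pow hρ hρ1 hf hs ht hst.le hcoarse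
    _ = modulusConst (2 ^ (-α)) * K * ((2 : ℝ) ^ n)⁻¹ ^ α := by rw [inv_two_pow_rpow]
    _ ≤ modulusConst (2 ^ (-α)) * K * (2 * (t - s)) ^ α := by
        have := modulusConst_pos hρ hρ1
        have := h.nonneg
        gcongr
    _ = 2 ^ α * modulusConst (2 ^ (-α)) * K * (t - s) ^ α := by
        rw [Real.mul_rpow zero_le_two hts.le]; ring

end Holder

section Haar

variable {α K : ℝ} {d : ℕ} {f : ℝ → EuclideanSpace ℝ (Fin d)}

lemma rpow_mul_norm_haarCoeff_succ (p k : ℕ) :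
    (2 : ℝ) ^ ((p : ℝ) * (α - 1 / 2)) * ‖haarCoeff f p (k + 1)‖
      = ‖2 • f ((2 * k + 1) / 2 ^ (p + 1)) - f (k / 2 ^ p) - f ((k + 1) / 2 ^ p)‖
        / ((2 : ℝ) ^ (-α)) ^ p := by
  have hmid : 2 * ((k + 1 : ℕ) : ℝ) - 1 = 2 * k + 1 := by push_cast; ring
  have hleft : ((k + 1 : ℕ) : ℝ) - 1 = k := by push_cast; ring
  rw [haarCoeff, hmid, hleft, Nat.cast_succ, norm_smul, Real.norm_of_nonneg (by positivity),
    ← mul_assoc, ← Real.rpow_add zero_lt_two, ← Real.rpow_mul_natCast zero_le_two,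
    eq_div_iff (by positivity), mul_right_comm, ← Real.rpow_add zero_lt_two]
  convert one_mul _
  rw [← Real.rpow_zero 2]
  congr 1
  ring

lemma haarCoeffBound_iff_midpointDefectBound :
    HaarCoeffBound α f K ↔ MidpointDefectBound ((2 : ℝ) ^ (-α)) f K := by
  refine and_congr_right' (forall_congr' fun p ↦ ⟨fun h k hk ↦ ?_, fun h m hm1 hm2 ↦ ?_⟩)
  · have := h (k + 1) (by omega) hk
    rwa [rpow_mul_norm_haarCoeff_succ, div_le_iff₀ (by positivity)] at this
  · obtain ⟨k, rfl⟩ := Nat.exists_eq_add_of_le' hm1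
    rw [rpow_mul_norm_haarCoeff_succ, div_le_iff₀ (by positivity)]
    exact h k hm2

end Haar

/-- Ciesielski's isomorphism: for `α ∈ (0,1)`, a continuous `f : [0,1] → ℝ^d` is `α`-Hölder
iff `sup_{p,m} 2^{p(α-1/2)}|⟨H_{pm},df⟩| < ∞`, and the two quantities are comparable up to a
constant depending only on `α`. -/
theorem ciesielski_isomorphism (α : ℝ) (hα0 : 0 < α) (hα1 : α < 1) :
    ∃ C > (0:ℝ), ∀ (d : ℕ) (f : ℝ → EuclideanSpace ℝ (Fin d)),
      ContinuousOn f (Icc 0 1) →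
      ((∃ K, HolderBound α f K) ↔ (∃ K, HaarCoeffBound α f K)) ∧
      (∀ K, 0 ≤ K → HolderBound α f K → HaarCoeffBound α f (C * K)) ∧
      (∀ K, 0 ≤ K → HaarCoeffBound α f K → HolderBound α f (C * K)) := by
  set C := max 2 (2 ^ α * modulusConst (2 ^ (-α)))
  refine ⟨C, lt_max_of_lt_left two_pos, fun d f hf ↦ ?_⟩
  have hHaar (K : ℝ) (h : HolderBound α f K) : HaarCoeffBound α f (C * K) :=
    haarCoeffBound_iff_midpointDefectBound.2 <| (h.midpointDefectBound hα0.le).mono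
      (by positivity) (by gcongr; exacts [h.nonneg, le_max_left _ _])
  have hHolder (K : ℝ) (h : HaarCoeffBound α f K) : HolderBound α f (C * K) := by
    have h' := haarCoeffBound_iff_midpointDefectBound.1 h
    exact (holderBound_of_midpointDefectBound hα0 hα1 hf h').mono
      (by gcongr; exacts [h'.nonneg, le_max_right _ _])
  exact ⟨⟨fun ⟨K, h⟩ ↦ ⟨_, hHaar K h⟩, fun ⟨K, h⟩ ↦ ⟨_, hHolder K h⟩⟩,
    fun K _ ↦ hHaar K, fun K _ ↦ hHolder K⟩
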